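/- Let V be a d-dimensional Euclidean space, and let A ∈ End(∧V*) be a linear combination of operators of the forms a*_i a_j and a*_i a_j a*_k a_l. If k ≤ d/2 - 1, then the supertrace of A^k vanishes: Str(A^k) = 0. -/

import Mathlib

/-!
`A ^ k` is a linear combination of even-length words in the `a*ᵢ`, `aⱼ` with at most `2k < d`
creation operators, so each such word `W` never creates some mode `m`.

If `a_m` occurs in `W`, write `W = X a_m Y` where `X`, `Y` preserve the states with `m` empty.
The image of `a_m` consists of such states and `a_m` kills them, so every diagonal entry of `W`
vanishes.

Otherwise `W` does not involve `m` and, having even length, commutes with the Majorana operator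
`c_m = a*_m + a_m`, which anticommutes with every other `a*ⱼ`, `aⱼ`. Now `c_m` is an involutive
signed permutation of the basis exchanging `e_S` and `e_{S ∆ {m}}`, which have opposite parities,
so `Str W = Str (c_m W c_m) = -Str W`.
-/

open Finset

variable {d : ℕ}

/-- The exterior algebra `∧V*` of the dual of a `d`-dimensional Euclidean space `V`,
realized concretely through its orthonormal basis `(θ_{i₁} ∧ ⋯ ∧ θ_{i_k})_{i₁<⋯<i_k}`
indexed by subsets of `{1,…,d}`, with the induced inner product. -/
abbrev FermionFock (d : ℕ) := EuclideanSpace ℝ (Finset (Fin d))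

/-- The creation operator `a*_i : ω ↦ θᵢ ∧ ω` on `∧V*`. -/
noncomputable def create (i : Fin d) : Module.End ℝ (FermionFock d) where
  toFun v := WithLp.toLp 2 fun (S : Finset (Fin d)) =>
    if i ∈ S then (-1 : ℝ) ^ ((S.filter fun j => j < i).card) * v (S.erase i) else 0
  map_add' u v := by
    ext S
    by_cases h : i ∈ S <;> simp [h, mul_add]
  map_smul' c v := by
    ext S
    by_cases h : i ∈ S <;> simp [h] <;> ring

/-- The annihilation operator `aᵢ`, the adjoint of `a*_i` with respect to the induced
inner product on `∧V*`. -/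
noncomputable def annih (i : Fin d) : Module.End ℝ (FermionFock d) :=
  LinearMap.adjoint (create i)


/-- The supertrace on `End(∧V*)`: the trace on even forms minus the trace on odd forms,
computed in the orthonormal basis `(e_S)` of `∧V*`. -/
noncomputable def Str (A : Module.End ℝ (FermionFock d)) : ℝ :=
  ∑ S : Finset (Fin d), (-1 : ℝ) ^ S.card * A (EuclideanSpace.single S 1) S

open scoped symmDiff

def jordanWignerSign (j : Fin d) (T : Finset (Fin d)) : ℝ := (-1) ^ #{x ∈ T | x < j}

lemma jordanWignerSign_mul_self (j : Fin d) (T : Finset (Fin d)) :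
    jordanWignerSign j T * jordanWignerSign j T = 1 := by
  rw [jordanWignerSign, ← pow_add, ← two_mul, pow_mul, neg_one_sq, one_pow]

lemma jordanWignerSign_insert {i j : Fin d} {T : Finset (Fin d)} (hi : i ∉ T) :
    jordanWignerSign j (insert i T) = (if i < j then -1 else 1) * jordanWignerSign j T := by
  unfold jordanWignerSign
  rw [filter_insert]
  split_ifs with h
  · rw [card_insert_of_notMem (fun h' => hi (mem_filter.1 h').1), pow_succ, mul_comm]
  · rw [one_mul]

lemma jordanWignerSign_of_mem {i j : Fin d} {T : Finset (Fin d)} (hi : i ∈ T) :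
    jordanWignerSign j T = (if i < j then -1 else 1) * jordanWignerSign j (T.erase i) := by
  rw [← jordanWignerSign_insert (notMem_erase i T), insert_erase hi]

lemma symmDiff_singleton_of_mem {m : Fin d} {T : Finset (Fin d)} (h : m ∈ T) :
    T ∆ {m} = T.erase m := by
  ext x; by_cases hx : x = m <;> simp [mem_symmDiff, hx, h]

lemma symmDiff_singleton_of_notMem {m : Fin d} {T : Finset (Fin d)} (h : m ∉ T) :
    T ∆ {m} = insert m T := by
  ext x; by_cases hx : x = m <;> simp [mem_symmDiff, hx, h]

lemma jordanWignerSign_symmDiff_singleton (m j : Fin d) (T : Finset (Fin d)) :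
    jordanWignerSign j (T ∆ {m}) = (if m < j then -1 else 1) * jordanWignerSign j T := by
  by_cases h : m ∈ T
  · rw [symmDiff_singleton_of_mem h, jordanWignerSign_of_mem h (j := j), ← mul_assoc]
    split_ifs <;> norm_num
  · rw [symmDiff_singleton_of_notMem h, jordanWignerSign_insert h]

lemma neg_one_pow_card_symmDiff_singleton (m : Fin d) (T : Finset (Fin d)) :
    (-1 : ℝ) ^ #(T ∆ {m}) = -(-1) ^ #T := by
  by_cases h : m ∈ T
  · rw [symmDiff_singleton_of_mem h, ← insert_erase h, card_insert_of_notMem (notMem_erase m T),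
      erase_insert (notMem_erase m T), pow_succ]
    ring
  · rw [symmDiff_singleton_of_notMem h, card_insert_of_notMem h, pow_succ]
    ring

lemma create_apply (j : Fin d) (v : FermionFock d) (T : Finset (Fin d)) :
    create j v T = if j ∈ T then jordanWignerSign j T * v (T.erase j) else 0 := rfl

lemma create_single (j : Fin d) (S : Finset (Fin d)) :
    create j (EuclideanSpace.single S 1) =
      if j ∈ S then 0 else jordanWignerSign j S • EuclideanSpace.single (insert j S) 1 := by
  ext T
  rw [create_apply]
  by_cases hjT : j ∈ T
  · by_cases hjS : j ∈ S
    · have : T.erase j ≠ S := fun h => notMem_erase j T (h ▸ hjS)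
      simp [hjT, hjS, this]
    · by_cases hTS : T.erase j = S
      · subst hTS
        simp [hjT, insert_erase hjT, jordanWignerSign_of_mem hjT (j := j)]
      · have : T ≠ insert j S := fun h => hTS (by rw [h, erase_insert hjS])
        simp [hjT, hjS, hTS, this]
  · have : ∀ S, T ≠ insert j S := fun S h => hjT (h ▸ mem_insert_self j S)
    split_ifs <;> simp [this]

lemma annih_apply (j : Fin d) (v : FermionFock d) (T : Finset (Fin d)) :
    annih j v T = if j ∈ T then 0 else jordanWignerSign j T * v (insert j T) := by
  have h : annih j v T = inner ℝ (create j (EuclideanSpace.single T 1)) v := by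
    rw [annih, ← LinearMap.adjoint_inner_right, EuclideanSpace.inner_single_left]; simp
  rw [h, create_single]
  split_ifs <;> simp [inner_smul_left, EuclideanSpace.inner_single_left]

noncomputable def majorana (m : Fin d) : Module.End ℝ (FermionFock d) := create m + annih m

lemma majorana_apply (m : Fin d) (v : FermionFock d) (T : Finset (Fin d)) :
    majorana m v T = jordanWignerSign m T * v (T ∆ {m}) := by
  simp only [majorana, LinearMap.add_apply, PiLp.add_apply, create_apply, annih_apply]
  by_cases h : m ∈ T
  · simp [h, symmDiff_singleton_of_mem h]
  · simp [h, symmDiff_singleton_of_notMem h]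

lemma majorana_single (m : Fin d) (S : Finset (Fin d)) :
    majorana m (EuclideanSpace.single S 1) =
      jordanWignerSign m S • EuclideanSpace.single (S ∆ {m}) 1 := by
  ext T
  have hflip : T ∆ {m} = S ↔ T = S ∆ {m} := by
    constructor <;> rintro rfl <;> rw [symmDiff_symmDiff_cancel_right]
  simp only [majorana_apply, PiLp.smul_apply, PiLp.single_apply, hflip]
  split_ifs with hT
  · rw [hT, jordanWignerSign_symmDiff_singleton, if_neg (lt_irrefl m), one_mul, smul_eq_mul]
  · simp

lemma majorana_mul_self (m : Fin d) : majorana m * majorana m = 1 := by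
  ext v T
  simp only [Module.End.mul_apply, majorana_apply, symmDiff_symmDiff_cancel_right,
    jordanWignerSign_symmDiff_singleton, lt_irrefl, if_false, one_mul, ← mul_assoc,
    jordanWignerSign_mul_self, Module.End.one_apply]

lemma star_majorana (m : Fin d) : star (majorana m) = majorana m := by
  rw [majorana, star_add, LinearMap.star_eq_adjoint, LinearMap.star_eq_adjoint, annih,
    LinearMap.adjoint_adjoint, add_comm]

lemma majorana_mul_create {j m : Fin d} (h : j ≠ m) :
    majorana m * create j = -(create j * majorana m) := by
  ext v T
  simp only [Module.End.mul_apply, LinearMap.neg_apply, PiLp.neg_apply, majorana_apply,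
    create_apply]
  have hmem : j ∈ T ∆ {m} ↔ j ∈ T := by simp [mem_symmDiff, h]
  have herase : (T ∆ {m}).erase j = T.erase j ∆ {m} := by
    ext x; by_cases hx : x = j <;> simp [mem_symmDiff, hx, h]
  simp only [hmem, herase]
  split_ifs with hj
  · rw [jordanWignerSign_symmDiff_singleton, jordanWignerSign_of_mem hj (j := m)]
    rcases h.lt_or_gt with hjm | hmj
    · simp only [if_pos hjm, if_neg hjm.not_gt]; ring
    · simp only [if_pos hmj, if_neg hmj.not_gt]; ring
  · rw [mul_zero, neg_zero]

lemma majorana_mul_annih {j m : Fin d} (h : j ≠ m) :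
    majorana m * annih j = -(annih j * majorana m) := by
  have := congrArg star (majorana_mul_create h)
  rw [star_mul, star_neg, star_mul, star_majorana, LinearMap.star_eq_adjoint, ← annih] at this
  rw [this, neg_neg]

lemma str_majorana_mul_mul_majorana (m : Fin d) (B : Module.End ℝ (FermionFock d)) :
    Str (majorana m * B * majorana m) = -Str B := by
  have hentry (S : Finset (Fin d)) : (majorana m * B * majorana m) (EuclideanSpace.single S 1) S =
      B (EuclideanSpace.single (S ∆ {m}) 1) (S ∆ {m}) := by
    simp only [Module.End.mul_apply, majorana_single, majorana_apply, map_smul, PiLp.smul_apply,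
      smul_eq_mul, ← mul_assoc, jordanWignerSign_mul_self, one_mul]
  simp only [Str, hentry]
  rw [← Equiv.sum_comp ((symmDiff_left_involutive {m}).toPerm _)]
  simp only [Function.Involutive.coe_toPerm, symmDiff_symmDiff_cancel_right,
    neg_one_pow_card_symmDiff_singleton, neg_mul, sum_neg_distrib]

lemma str_eq_zero_of_commute_majorana {m : Fin d} {B : Module.End ℝ (FermionFock d)}
    (h : Commute (majorana m) B) : Str B = 0 := by
  have : Str B = -Str B := by
    rw [← str_majorana_mul_mul_majorana m, h.eq, mul_assoc, majorana_mul_self, mul_one]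
  linarith

noncomputable def ladder : Fin d × Bool → Module.End ℝ (FermionFock d)
  | (i, true) => create i
  | (i, false) => annih i

noncomputable def wordOp (w : List (Fin d × Bool)) : Module.End ℝ (FermionFock d) :=
  (w.map ladder).prod

@[simp]
lemma wordOp_nil : wordOp ([] : List (Fin d × Bool)) = 1 := rfl

@[simp]
lemma wordOp_cons (p : Fin d × Bool) (w : List (Fin d × Bool)) :
    wordOp (p :: w) = ladder p * wordOp w := by
  simp [wordOp]

lemma wordOp_append (w₁ w₂ : List (Fin d × Bool)) :
    wordOp (w₁ ++ w₂) = wordOp w₁ * wordOp w₂ := by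
  simp [wordOp]

lemma majorana_mul_ladder {m : Fin d} {p : Fin d × Bool} (h : p.1 ≠ m) :
    majorana m * ladder p = -(ladder p * majorana m) := by
  obtain ⟨j, _ | _⟩ := p
  exacts [majorana_mul_annih h, majorana_mul_create h]

lemma majorana_mul_wordOp {m : Fin d} {w : List (Fin d × Bool)} (hw : ∀ p ∈ w, p.1 ≠ m) :
    majorana m * wordOp w = (-1 : ℝ) ^ w.length • (wordOp w * majorana m) := by
  induction w with
  | nil => simp
  | cons p w ih =>
    rw [wordOp_cons, ← mul_assoc, majorana_mul_ladder (hw p List.mem_cons_self), neg_mul,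
      mul_assoc, ih fun q hq => hw q (List.mem_cons_of_mem p hq), List.length_cons, pow_succ,
      mul_neg_one, neg_smul, mul_smul_comm, mul_assoc]

lemma commute_majorana_wordOp {m : Fin d} {w : List (Fin d × Bool)} (hw : ∀ p ∈ w, p.1 ≠ m)
    (he : Even w.length) : Commute (majorana m) (wordOp w) := by
  rw [Commute, SemiconjBy, majorana_mul_wordOp hw, he.neg_one_pow, one_smul]

def Unoccupied (m : Fin d) (v : FermionFock d) : Prop := ∀ T, m ∈ T → v T = 0

lemma unoccupied_single {m : Fin d} {S : Finset (Fin d)} (h : m ∉ S) :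
    Unoccupied m (EuclideanSpace.single S 1) := fun T hT => by
  rw [PiLp.single_apply, if_neg fun hTS : T = S => h (hTS ▸ hT)]

lemma unoccupied_annih_self (m : Fin d) (v : FermionFock d) : Unoccupied m (annih m v) :=
  fun T hT => by rw [annih_apply, if_pos hT]

lemma annih_self_eq_zero {m : Fin d} {v : FermionFock d} (hv : Unoccupied m v) :
    annih m v = 0 := by
  ext T
  rw [annih_apply]
  split_ifs
  · rfl
  · rw [hv _ (mem_insert_self m T), mul_zero]; rfl

lemma Unoccupied.ladder {m : Fin d} {p : Fin d × Bool} (hp : p ≠ (m, true)) {v : FermionFock d}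
    (hv : Unoccupied m v) : Unoccupied m (ladder p v) := by
  intro T hT
  obtain ⟨j, _ | _⟩ := p
  · simp only [_root_.ladder, annih_apply]
    split_ifs
    · rfl
    · rw [hv _ (mem_insert_of_mem hT), mul_zero]
  · have hjm : j ≠ m := fun h => hp (h ▸ rfl)
    simp only [_root_.ladder, create_apply]
    split_ifs
    · rw [hv _ (mem_erase.2 ⟨hjm.symm, hT⟩), mul_zero]
    · rfl

lemma Unoccupied.wordOp {m : Fin d} {w : List (Fin d × Bool)} (hw : (m, true) ∉ w)
    {v : FermionFock d} (hv : Unoccupied m v) : Unoccupied m (wordOp w v) := by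
  induction w with
  | nil => exact hv
  | cons p w ih =>
    rw [List.mem_cons, not_or] at hw
    exact (ih hw.2).ladder (Ne.symm hw.1)

lemma str_mul_annih_mul_eq_zero {m : Fin d} {X Y : Module.End ℝ (FermionFock d)}
    (hX : ∀ v, Unoccupied m v → Unoccupied m (X v))
    (hY : ∀ v, Unoccupied m v → Unoccupied m (Y v)) : Str (X * annih m * Y) = 0 := by
  refine sum_eq_zero fun S _ => ?_
  by_cases hS : m ∈ S
  · rw [Module.End.mul_apply, Module.End.mul_apply, hX _ (unoccupied_annih_self m _) S hS,
      mul_zero]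
  · rw [Module.End.mul_apply, Module.End.mul_apply,
      annih_self_eq_zero (hY _ (unoccupied_single hS)), map_zero]
    simp

lemma exists_mode_not_created {w : List (Fin d × Bool)} (hw : w.countP (·.2) < d) :
    ∃ m, (m, true) ∉ w := by
  by_contra! h
  have hsub : (univ : Finset (Fin d)) ⊆ ((w.filter (·.2)).map Prod.fst).toFinset := fun m _ =>
    List.mem_toFinset.2 (List.mem_map.2 ⟨(m, true), List.mem_filter.2 ⟨h m, rfl⟩, rfl⟩)
  have := (card_le_card hsub).trans (List.toFinset_card_le _)
  rw [card_univ, Fintype.card_fin, List.length_map, ← List.countP_eq_length_filter] at this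
  omega

lemma str_wordOp_eq_zero {w : List (Fin d × Bool)} (hw : w.countP (·.2) < d)
    (he : Even w.length) : Str (wordOp w) = 0 := by
  obtain ⟨m, hm⟩ := exists_mode_not_created hw
  by_cases ha : (m, false) ∈ w
  · obtain ⟨w₁, w₂, rfl⟩ := List.append_of_mem ha
    have hm₁ : (m, true) ∉ w₁ := fun h => hm (List.mem_append_left _ h)
    have hm₂ : (m, true) ∉ w₂ := fun h =>
      hm (List.mem_append_right _ (List.mem_cons_of_mem _ h))
    rw [wordOp_append, wordOp_cons, ← mul_assoc]
    exact str_mul_annih_mul_eq_zero (fun _ => Unoccupied.wordOp hm₁)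
      (fun _ => Unoccupied.wordOp hm₂)
  · refine str_eq_zero_of_commute_majorana (commute_majorana_wordOp (m := m) ?_ he)
    rintro ⟨j, b⟩ hp rfl
    cases b
    exacts [ha hp, hm hp]

def evenWords (n : ℕ) : Set (Module.End ℝ (FermionFock d)) :=
  {B | ∃ w : List (Fin d × Bool), w.countP (·.2) ≤ n ∧ Even w.length ∧ wordOp w = B}

open Pointwise in
lemma evenWords_mul_subset (a b : ℕ) :
    evenWords (d := d) a * evenWords b ⊆ evenWords (a + b) := by
  rintro _ ⟨_, ⟨w₁, hc₁, he₁, rfl⟩, _, ⟨w₂, hc₂, he₂, rfl⟩, rfl⟩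
  refine ⟨w₁ ++ w₂, ?_, ?_, wordOp_append w₁ w₂⟩
  · rw [List.countP_append]; omega
  · rw [List.length_append]; exact he₁.add he₂

open Pointwise in
lemma evenWords_pow_subset (n k : ℕ) : evenWords (d := d) n ^ k ⊆ evenWords (k * n) := by
  induction k with
  | zero => exact Set.one_subset.2 ⟨[], by simp, by simp, rfl⟩
  | succ k ih =>
    rw [pow_succ, Nat.succ_mul]
    exact (Set.mul_subset_mul_right ih).trans (evenWords_mul_subset _ _)

lemma generators_subset_evenWords :
    {T | ∃ i j, T = create i * annih j} ∪
        {T | ∃ i j k l, T = create i * annih j * (create k * annih l)} ⊆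
      evenWords (d := d) 2 := by
  rintro _ (⟨i, j, rfl⟩ | ⟨i, j, k, l, rfl⟩)
  · exact ⟨[(i, true), (j, false)], by simp, by simp, by simp [ladder]⟩
  · exact ⟨[(i, true), (j, false), (k, true), (l, false)], by simp, by simp [Nat.even_iff],
      by simp [ladder, mul_assoc]⟩

noncomputable def strLinearMap : Module.End ℝ (FermionFock d) →ₗ[ℝ] ℝ where
  toFun := Str
  map_add' A B := by
    simp only [Str, LinearMap.add_apply, PiLp.add_apply, mul_add, sum_add_distrib]
  map_smul' c A := by
    simp only [Str, LinearMap.smul_apply, PiLp.smul_apply, smul_eq_mul, RingHom.id_apply,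
      mul_sum, mul_left_comm]

/-- **Vanishing of low-order supertraces.** If `A ∈ End(∧V*)` is a linear combination of
operators of the forms `a*ᵢ aⱼ` and `a*ᵢ aⱼ a*ₖ aₗ`, and `k ≤ d/2 - 1`, then
`Str(A^k) = 0`. -/
theorem supertrace_low_power_vanishes (d : ℕ) (A : Module.End ℝ (FermionFock d))
    (hA : A ∈ Submodule.span ℝ
      ({T | ∃ i j, T = create i * annih j} ∪
        {T | ∃ i j k l, T = create i * annih j * (create k * annih l)}))
    (k : ℕ) (hk : (k : ℝ) ≤ (d : ℝ) / 2 - 1) :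
    Str (A ^ k) = 0 := by
  have hkd : k * 2 < d := by
    have : ((k * 2 : ℕ) : ℝ) < d := by push_cast; linarith
    exact_mod_cast this
  have hpow : A ^ k ∈ Submodule.span ℝ (evenWords (k * 2)) := by
    have := Submodule.pow_mem_pow _ (Submodule.span_mono generators_subset_evenWords hA) k
    rw [Submodule.span_pow] at this
    exact Submodule.span_mono (evenWords_pow_subset 2 k) this
  have hker : Submodule.span ℝ (evenWords (k * 2)) ≤ LinearMap.ker (strLinearMap (d := d)) :=
    Submodule.span_le.2 fun _ ⟨_, hc, he, hB⟩ => hB ▸ str_wordOp_eq_zero (hc.trans_lt hkd) he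
  exact hker hpow
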